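/- arXiv:0906.1256 — 4 statements merged into one kernel-verified Lean document; each statement's English description precedes it below -/
import Mathlib

section
/- For every t ∈ (0,1), √(1−t²) + (π − arccos t)/t > π. -/
/-! Multiplying by `t`, the claim says `g t > g 1 = -π` for `g x = x √(1 - x²) - arccos x - π x`.
Since `g' x = 2 √(1 - x²) - π ≤ 2 - π < 0`, the function `g` is strictly decreasing on `[-1, 1]`. -/

open Real

theorem hasDerivAt_mul_sqrt_one_sub_sq_sub_arccos {x : ℝ} (hx : x ∈ Set.Ioo (-1 : ℝ) 1) :
    HasDerivAt (fun y => y * √(1 - y ^ 2) - arccos y) (2 * √(1 - x ^ 2)) x := by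
  obtain ⟨hx₀, hx₁⟩ := hx
  have hpos : 0 < 1 - x ^ 2 := by nlinarith
  have hsqrt : HasDerivAt (fun y => √(1 - y ^ 2)) (-x / √(1 - x ^ 2)) x := by
    convert ((hasDerivAt_pow 2 x).const_sub 1).sqrt hpos.ne' using 1
    ring
  refine (((hasDerivAt_id' x).mul hsqrt).sub (hasDerivAt_arccos hx₀.ne' hx₁.ne)).congr_deriv ?_
  have hs : √(1 - x ^ 2) ≠ 0 := (sqrt_pos.mpr hpos).ne'
  field_simp
  rw [sq_sqrt hpos.le]
  ring

theorem strictAntiOn_mul_sqrt_one_sub_sq_sub_arccos_sub_pi_mul :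
    StrictAntiOn (fun x => x * √(1 - x ^ 2) - arccos x - π * x) (Set.Icc (-1) 1) := by
  refine strictAntiOn_of_deriv_neg (convex_Icc _ _) (by fun_prop) fun x hx => ?_
  rw [interior_Icc] at hx
  have hderiv : HasDerivAt (fun x => x * √(1 - x ^ 2) - arccos x - π * x)
      (2 * √(1 - x ^ 2) - π * 1) x :=
    (hasDerivAt_mul_sqrt_one_sub_sq_sub_arccos hx).sub ((hasDerivAt_id' x).const_mul π)
  rw [hderiv.deriv]
  have : √(1 - x ^ 2) ≤ 1 := sqrt_le_one.mpr (by nlinarith [sq_nonneg x])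
  linarith [pi_gt_three]

theorem line_density_ratio_gt_pi (t : ℝ) (ht : t ∈ Set.Ioo (0 : ℝ) 1) :
    Real.sqrt (1 - t ^ 2) + (π - arccos t) / t > π := by
  obtain ⟨ht₀, ht₁⟩ := ht
  have hlt := strictAntiOn_mul_sqrt_one_sub_sq_sub_arccos_sub_pi_mul
    ⟨by linarith, ht₁.le⟩ ⟨by norm_num, le_rfl⟩ ht₁
  simp only [one_pow, sub_self, sqrt_zero, mul_zero, arccos_one, mul_one] at hlt
  rw [gt_iff_lt, ← sub_lt_iff_lt_add', lt_div_iff₀ ht₀]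
  linarith
end

section
/- The function ψ(t) = √(1−t²) + (π − arccos t)/t is strictly decreasing on (0,1). -/
/-!
On `(0, 1)` one computes `ψ'(t) = (t √(1 - t²) - (π - arccos t)) / t²`. The numerator is negative:
`t √(1 - t²) ≤ 1/2` by AM-GM, while `π - arccos t ≥ π / 2` since `arccos t ≤ π / 2` for `t ≥ 0`.
-/

open Real

noncomputable def psi (t : ℝ) : ℝ := √(1 - t ^ 2) + (π - arccos t) / t

lemma mul_sqrt_one_sub_sq_le_half (x : ℝ) : x * √(1 - x ^ 2) ≤ 1 / 2 := by
  rcases le_or_gt 0 (1 - x ^ 2) with h | h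
  · nlinarith [sq_nonneg (x - √(1 - x ^ 2)), sq_sqrt h]
  · rw [sqrt_eq_zero'.mpr h.le]
    norm_num

lemma hasDerivAt_sqrt_one_sub_sq {x : ℝ} (hx₁ : -1 < x) (hx₂ : x < 1) :
    HasDerivAt (fun t ↦ √(1 - t ^ 2)) (-x / √(1 - x ^ 2)) x := by
  have hpos : 0 < 1 - x ^ 2 := by nlinarith
  convert ((hasDerivAt_pow 2 x).const_sub 1).sqrt hpos.ne' using 1
  field_simp
  ring

lemma hasDerivAt_psi {x : ℝ} (hx₀ : x ≠ 0) (hx₁ : -1 < x) (hx₂ : x < 1) :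
    HasDerivAt psi ((x * √(1 - x ^ 2) - (π - arccos x)) / x ^ 2) x := by
  have hpos : 0 < 1 - x ^ 2 := by nlinarith
  have hsq : √(1 - x ^ 2) ^ 2 = 1 - x ^ 2 := sq_sqrt hpos.le
  have harccos := ((hasDerivAt_arccos hx₁.ne' hx₂.ne).const_sub π).div (hasDerivAt_id' x) hx₀
  refine ((hasDerivAt_sqrt_one_sub_sq hx₁ hx₂).add harccos).congr_deriv ?_
  field_simp
  linear_combination -x * hsq

lemma mul_sqrt_one_sub_sq_lt_pi_sub_arccos {x : ℝ} (hx : 0 ≤ x) :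
    x * √(1 - x ^ 2) < π - arccos x := by
  have := arccos_le_pi_div_two.mpr hx
  linarith [mul_sqrt_one_sub_sq_le_half x, pi_gt_three]

theorem psi_strictAnti :
    StrictAntiOn (fun t : ℝ => Real.sqrt (1 - t ^ 2) + (π - arccos t) / t)
      (Set.Ioo (0 : ℝ) 1) := by
  change StrictAntiOn psi _
  have hderiv : ∀ x ∈ Set.Ioo (0 : ℝ) 1,
      HasDerivAt psi ((x * √(1 - x ^ 2) - (π - arccos x)) / x ^ 2) x :=
    fun x ⟨hx₀, hx₁⟩ ↦ hasDerivAt_psi hx₀.ne' (by linarith) hx₁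
  refine strictAntiOn_of_hasDerivWithinAt_neg (convex_Ioo 0 1)
    (f' := fun x ↦ (x * √(1 - x ^ 2) - (π - arccos x)) / x ^ 2)
    (fun x hx ↦ (hderiv x hx).continuousAt.continuousWithinAt) ?_ ?_
  · rw [interior_Ioo]
    exact fun x hx ↦ (hderiv x hx).hasDerivWithinAt
  · rw [interior_Ioo]
    rintro x ⟨hx₀, -⟩
    exact div_neg_of_neg_of_pos (sub_neg.mpr (mul_sqrt_one_sub_sq_lt_pi_sub_arccos hx₀.le))
      (by positivity)
end

section
/- Let λ > 1 and α = arccos(1/λ) ∈ (0, π/2). Then the quantity 4(((π−α)λ + sin α)²)/(λ(π − α + sin α cos α)) is strictly less than 4πλ. -/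
open Real

theorem truncated_disk_ratio_lt (lam : ℝ) (hlam : 1 < lam) :
    4 * ((π - arccos (1 / lam)) * lam + sin (arccos (1 / lam))) ^ 2 /
        (lam * (π - arccos (1 / lam) +
          sin (arccos (1 / lam)) * cos (arccos (1 / lam)))) <
      4 * π * lam := by
  have hlam0 : (0:ℝ) < lam := by linarith
  have h1 : (0:ℝ) < 1 / lam := by positivity
  have h2 : 1 / lam < 1 := by rw [div_lt_one hlam0]; exact hlam
  set α := arccos (1 / lam) with hαdef
  have hc : cos α = 1 / lam := Real.cos_arccos (by linarith) (by linarith)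
  have hαpos : 0 < α := Real.arccos_pos.mpr h2
  have hαle : α ≤ π := Real.arccos_le_pi _
  have hcpos : 0 < cos α := by rw [hc]; positivity
  have hαlt2 : α < π / 2 := by
    by_contra h
    push_neg at h
    have := Real.cos_nonpos_of_pi_div_two_le_of_le h (by linarith)
    linarith
  have hπ : 0 < π := Real.pi_pos
  have hs : 0 < sin α := Real.sin_pos_of_pos_of_lt_pi hαpos (by linarith)
  set s := sin α with hsdef
  have hkey : s * cos α < α := by
    have h := Real.sin_lt (by linarith : (0:ℝ) < 2 * α)
    have h2m := Real.sin_two_mul α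
    nlinarith
  have hD : 0 < lam * (π - α + s * cos α) := by
    nlinarith [mul_pos hs hcpos]
  rw [div_lt_iff₀ hD]
  have hlc : lam * cos α = 1 := by rw [hc]; field_simp
  have hf : 0 < (α - s * cos α) * (π - α + s * cos α) :=
    mul_pos (by linarith) (by nlinarith [mul_pos hs hcpos])
  have heq : lam * (s * cos α) = s := by
    calc lam * (s * cos α) = s * (lam * cos α) := by ring
      _ = s := by rw [hlc]; ring
  have hf2 : 0 < lam ^ 2 * ((α - s * cos α) * (π - α + s * cos α)) := by
    positivity
  have e1 : lam ^ 2 * (s * cos α) = lam * s := by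
    calc lam ^ 2 * (s * cos α) = lam * (lam * (s * cos α)) := by ring
      _ = lam * s := by rw [heq]
  have expand : lam ^ 2 * ((α - s * cos α) * (π - α + s * cos α)) =
      lam ^ 2 * α * (π - α) - lam * s * (π - 2 * α) - s ^ 2 := by
    linear_combination (lam * (2 * α - π) - (lam * (s * cos α) + s)) * heq
  have hf3 : 0 < lam ^ 2 * α * (π - α) - lam * s * (π - 2 * α) - s ^ 2 := by
    rw [← expand]; exact hf2
  nlinarith [hf3, e1]
end

section
/- Let λ > 1, β₀ = arccos(1/λ), and for small α > 0 set β = α + β₀, P(α) = 2(α + λ(sin α/sin β)(π−β)) and A(α) = λ[α − sin α cos α + (sin α/sin β)²(π − β + sin β cos β)]. Then lim_{α→0} P(α)²/A(α) = 4 sin β₀ (1 + (π−β₀)/(sin β₀ cos β₀)), and this limit is strictly greater than 4π. -/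
/-!
Since `sin α / α → 1` and `α - sin α cos α = O(α³)`, the perimeter is `~ 2(1 + λ(π - β₀)/sin β₀) α`
and the area is `~ λ(π - β₀ + sin β₀ cos β₀)/sin² β₀ · α²`. Under the Snell condition `λ cos β₀ = 1`
the ratio of these constants is `4(sin β₀ + (π - β₀)/cos β₀)`. Multiplied by `cos β₀`, the comparison
with `4π` becomes `g(β₀) > 0` for `g(x) = π(1 - cos x) - x + sin x cos x`, which holds because
`g(0) = 0` and `g'(x) = sin x (π - 2 sin x) > 0` on `(0, π/2)`.
-/

open Real Filter Topology

noncomputable def capPerimeter (lam b α : ℝ) : ℝ :=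
  2 * (α + lam * (sin α / sin (α + b)) * (π - (α + b)))

noncomputable def capArea (lam b α : ℝ) : ℝ :=
  lam * (α - sin α * cos α +
    (sin α / sin (α + b)) ^ 2 * (π - (α + b) + sin (α + b) * cos (α + b)))

lemma sub_sin_mul_cos_pos {x : ℝ} (hx : 0 < x) : 0 < x - sin x * cos x := by
  have := sin_lt (by positivity : 0 < 2 * x)
  rw [sin_two_mul] at this
  linarith

lemma sub_sin_mul_cos_lt {x : ℝ} (hx : 0 < x) : x - sin x * cos x < 2 / 3 * x ^ 3 := by
  have := sin_gt_sub_cube (by positivity : 0 < 2 * x)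
  rw [sin_two_mul] at this
  linarith

lemma tendsto_sub_sin_mul_cos_div_sq :
    Tendsto (fun x => (x - sin x * cos x) / x ^ 2) (𝓝[>] 0) (𝓝 0) := by
  have hlin : Tendsto (fun x : ℝ => 2 / 3 * x) (𝓝[>] 0) (𝓝 0) := by
    simpa using ((continuous_const_mul (2 / 3 : ℝ)).tendsto 0).mono_left nhdsWithin_le_nhds
  refine squeeze_zero' ?_ ?_ hlin <;> filter_upwards [self_mem_nhdsWithin] with x (hx : 0 < x)
  · exact (div_pos (sub_sin_mul_cos_pos hx) (by positivity)).le
  · rw [div_le_iff₀ (by positivity)]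
    nlinarith [sub_sin_mul_cos_lt hx]

section

variable {lam b : ℝ}

lemma tendsto_capPerimeter_div (hb : sin b ≠ 0) :
    Tendsto (fun α => capPerimeter lam b α / α) (𝓝[>] 0)
      (𝓝 (2 * (1 + lam * ((π - b) / sin b)))) := by
  have hcont : ContinuousAt
      (fun α => 2 * (1 + lam * sinc α * ((π - (α + b)) / sin (α + b)))) 0 := by
    have : sin (0 + b) ≠ 0 := by rwa [zero_add]
    fun_prop (disch := assumption)
  have hlim := hcont.tendsto.mono_left (nhdsWithin_le_nhds (s := Set.Ioi 0))
  simp only [sinc_zero, zero_add, mul_one] at hlim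
  refine hlim.congr' ?_
  filter_upwards [self_mem_nhdsWithin] with α (hα : 0 < α)
  rw [capPerimeter, sinc_of_ne_zero hα.ne']
  field_simp

lemma tendsto_capArea_div_sq (hb : sin b ≠ 0) :
    Tendsto (fun α => capArea lam b α / α ^ 2) (𝓝[>] 0)
      (𝓝 (lam * ((π - b + sin b * cos b) / sin b ^ 2))) := by
  have hcont : ContinuousAt (fun α => sinc α ^ 2 *
      ((π - (α + b) + sin (α + b) * cos (α + b)) / sin (α + b) ^ 2)) 0 := by
    have : sin (0 + b) ^ 2 ≠ 0 := by rw [zero_add]; positivity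
    fun_prop (disch := assumption)
  have hlim := (tendsto_sub_sin_mul_cos_div_sq.add
    (hcont.tendsto.mono_left nhdsWithin_le_nhds)).const_mul lam
  simp only [sinc_zero, zero_add, one_pow, one_mul] at hlim
  refine hlim.congr' ?_
  filter_upwards [self_mem_nhdsWithin] with α (hα : 0 < α)
  rw [capArea, sinc_of_ne_zero hα.ne']
  field_simp

lemma tendsto_capPerimeter_sq_div_capArea (hb : sin b ≠ 0)
    (hA : lam * ((π - b + sin b * cos b) / sin b ^ 2) ≠ 0) :
    Tendsto (fun α => capPerimeter lam b α ^ 2 / capArea lam b α) (𝓝[>] 0)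
      (𝓝 ((2 * (1 + lam * ((π - b) / sin b))) ^ 2 /
        (lam * ((π - b + sin b * cos b) / sin b ^ 2)))) := by
  refine (((tendsto_capPerimeter_div hb).pow 2).div (tendsto_capArea_div_sq hb) hA).congr' ?_
  filter_upwards [self_mem_nhdsWithin] with α (hα : 0 < α)
  simp only [Pi.div_apply, div_pow]
  rw [div_div_div_cancel_right₀ (by positivity)]

lemma perimeter_sq_div_area_limit_eq_of_snell (hs : sin b ≠ 0)
    (hA : π - b + sin b * cos b ≠ 0) (hsnell : lam * cos b = 1) :
    (2 * (1 + lam * ((π - b) / sin b))) ^ 2 /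
        (lam * ((π - b + sin b * cos b) / sin b ^ 2)) =
      4 * sin b * (1 + (π - b) / (sin b * cos b)) := by
  have hc : cos b ≠ 0 := right_ne_zero_of_mul_eq_one hsnell
  obtain rfl : lam = (cos b)⁻¹ := eq_inv_of_mul_eq_one_left hsnell
  have hA' : π - b + cos b * sin b ≠ 0 := by rwa [mul_comm (cos b)]
  field_simp
  ring

lemma pi_lt_sin_add_div_cos (h₀ : 0 < b) (h₁ : b < π / 2) :
    π < sin b + (π - b) / cos b := by
  set g : ℝ → ℝ := fun x => π * (1 - cos x) - x + sin x * cos x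
  have hderiv (x : ℝ) : HasDerivAt g (sin x * (π - 2 * sin x)) x := by
    refine (((hasDerivAt_const x π).mul ((hasDerivAt_const x 1).sub (hasDerivAt_cos x))).sub
      (hasDerivAt_id' x) |>.add ((hasDerivAt_sin x).mul (hasDerivAt_cos x))).congr_deriv ?_
    nlinarith [sin_sq_add_cos_sq x]
  have hmono : StrictMonoOn g (Set.Icc 0 (π / 2)) := by
    refine strictMonoOn_of_deriv_pos (convex_Icc _ _)
      (fun x _ => (hderiv x).continuousAt.continuousWithinAt) fun x hx => ?_
    rw [interior_Icc] at hx
    rw [(hderiv x).deriv]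
    have hsin : 0 < sin x := sin_pos_of_pos_of_lt_pi hx.1 (by linarith [hx.2, pi_pos])
    nlinarith [sin_le_one x, pi_gt_three]
  have hg : 0 < g b := by
    simpa [g] using hmono (Set.left_mem_Icc.2 (by positivity)) ⟨h₀.le, h₁.le⟩ h₀
  have hcos : 0 < cos b := cos_pos_of_mem_Ioo ⟨by linarith, h₁⟩
  rw [← sub_pos, add_div' _ _ _ hcos.ne', div_sub' hcos.ne']
  exact div_pos (by linarith [hg]) hcos

end

theorem small_cap_ratio_limit (lam : ℝ) (hlam : 1 < lam) :
    Filter.Tendsto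
      (fun α : ℝ =>
        (2 * (α + lam * (sin α / sin (α + arccos (1 / lam))) *
            (π - (α + arccos (1 / lam))))) ^ 2 /
          (lam * (α - sin α * cos α +
            (sin α / sin (α + arccos (1 / lam))) ^ 2 *
              (π - (α + arccos (1 / lam)) +
                sin (α + arccos (1 / lam)) * cos (α + arccos (1 / lam))))))
      (nhdsWithin 0 (Set.Ioi 0))
      (nhds (4 * sin (arccos (1 / lam)) *
        (1 + (π - arccos (1 / lam)) /
          (sin (arccos (1 / lam)) * cos (arccos (1 / lam)))))) ∧
    4 * π < 4 * sin (arccos (1 / lam)) *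
      (1 + (π - arccos (1 / lam)) /
        (sin (arccos (1 / lam)) * cos (arccos (1 / lam)))) := by
  set b := arccos (1 / lam)
  have hlam₀ : 0 < lam := by linarith
  have hb₀ : 0 < b := arccos_pos.2 ((div_lt_one hlam₀).2 hlam)
  have hb₁ : b < π / 2 := arccos_lt_pi_div_two.2 (by positivity)
  have hcos : cos b = 1 / lam := cos_arccos (by linarith [one_div_pos.2 hlam₀])
    ((div_le_one hlam₀).2 hlam.le)
  have hsin : 0 < sin b := sin_pos_of_pos_of_lt_pi hb₀ (by linarith [pi_pos])
  have hA : 0 < π - b + sin b * cos b := by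
    have : 0 < sin b * cos b := mul_pos hsin (by rw [hcos]; positivity)
    linarith
  constructor
  · have hlim := tendsto_capPerimeter_sq_div_capArea (lam := lam) hsin.ne'
      (by positivity)
    rwa [perimeter_sq_div_area_limit_eq_of_snell hsin.ne' hA.ne'
      (by rw [hcos]; field_simp)] at hlim
  · have hsplit : 4 * sin b * (1 + (π - b) / (sin b * cos b)) = 4 * (sin b + (π - b) / cos b) := by
      field_simp
    rw [hsplit]
    linarith [pi_lt_sin_add_div_cos hb₀ hb₁]
end
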